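/- arXiv:2501.17645 — 3 statements merged into one kernel-verified Lean document; each statement's English description precedes it below -/
import Mathlib

section
/- If X and U are finite and all values G(x), g(x,y,u) are in ℝ∪{∞} with g nonnegative, then the iteration W_0 = G, W_{n+1} = P(W_n) stabilizes: there exists N ≤ |X| such that W_{N+1} = W_N, and W_N is the maximal fixed point of P. -/
noncomputable def Pop {X U : Type*} (F : X → U → Set X) (G : X → EReal)
    (g : X → X → U → EReal) (W : X → EReal) (x : X) : EReal :=
  min (G x) (⨅ u : U, ⨆ y ∈ F x u, g x y u + W y)

/-! Value iteration `W n = P^[n] G` decreases pointwise to `W∞ = ⨅ n, W n`, and every `V ≤ G`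
with `V ≤ W∞ ⊔ P V` (in particular every fixed point of `P`) lies below `W∞`.

The heart is a Dijkstra-type argument. Suppose some states are still unsettled at step `n`
(`W n x ≠ W∞ x`) and let `m` be their least limit value. If none of the unsettled states of value
`m` settles at step `n + 1`, then every action at such a state either has value `> m` under `W∞`, or
leads, at zero cost (`g ≥ 0`), to another such state. Raising `W∞` on this level set to some
`m' > m` below all the finitely many competing values `> m` then yields a function `V` that
still satisfies `V ≤ W∞ ⊔ P V`, hence `V ≤ W∞`, which is absurd. So each step settles a new
state, after at most `|X|` steps `W n = W∞`, and `W∞` is then a fixed point. -/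

open Finset Function

theorem Monotone.le_iterate_of_le_sup {α : Type*} [SemilatticeSup α] {f : α → α}
    (hf : Monotone f) {a b v : α} (hb : ∀ n, b ≤ f^[n + 1] a) (hva : v ≤ a)
    (hv : v ≤ b ⊔ f v) (n : ℕ) : v ≤ f^[n] a := by
  induction n with
  | zero => exact hva
  | succ n ih =>
    rw [iterate_succ_apply']
    exact hv.trans (sup_le (by simpa only [iterate_succ_apply'] using hb n) (hf ih))

theorem Finset.exists_le_card_eq_univ {α : Type*} [Fintype α] (s : ℕ → Finset α)
    (hs : ∀ k, s k ≠ univ → #(s k) < #(s (k + 1))) : ∃ N ≤ Fintype.card α, s N = univ := by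
  by_contra! hN
  have hcard : ∀ k ≤ Fintype.card α, k ≤ #(s k) := by
    intro k hk
    induction k with
    | zero => exact Nat.zero_le _
    | succ k ih => exact (ih (by omega)).trans_lt (hs k (hN k (by omega)))
  exact hN _ le_rfl (card_eq_iff_eq_univ _ |>.1 ((card_le_univ _).antisymm (hcard _ le_rfl)))

theorem exists_gt_forall_le_of_finite {ι α : Type*} [Finite ι] [LinearOrder α] {m b : α}
    (hmb : m < b) (f : ι → α) : ∃ m', m < m' ∧ ∀ i, m < f i → m' ≤ f i := by
  rcases {i | m < f i}.eq_empty_or_nonempty with hempty | hne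
  · exact ⟨b, hmb, fun i hi => absurd hi (Set.eq_empty_iff_forall_notMem.1 hempty i)⟩
  · obtain ⟨i, hi, hmin⟩ := Set.exists_min_image _ f (Set.toFinite _) hne
    exact ⟨f i, hi, hmin⟩

section Bellman

variable {X U : Type*} (F : X → U → Set X) (G : X → EReal) (g : X → X → U → EReal)

noncomputable def actionValue (V : X → EReal) (x : X) (u : U) : EReal :=
  ⨆ y ∈ F x u, g x y u + V y

theorem Pop_eq (V : X → EReal) (x : X) : Pop F G g V x = min (G x) (⨅ u, actionValue F g V x u) :=
  rfl

theorem actionValue_mono {V W : X → EReal} (h : V ≤ W) (x : X) (u : U) :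
    actionValue F g V x u ≤ actionValue F g W x u :=
  iSup₂_mono fun y _ => add_le_add_right (h y) _

theorem le_actionValue_of_mem {V : X → EReal} {x y : X} {u : U} (hy : y ∈ F x u) :
    g x y u + V y ≤ actionValue F g V x u :=
  le_iSup₂ (f := fun y (_ : y ∈ F x u) => g x y u + V y) y hy

theorem Pop_mono : Monotone (Pop F G g) := fun _ _ h x =>
  min_le_min le_rfl (iInf_mono fun u => actionValue_mono F g h x u)

theorem Pop_le (V : X → EReal) : Pop F G g V ≤ G := fun _ => min_le_left _ _

noncomputable def bellmanLimit : X → EReal := ⨅ n : ℕ, (Pop F G g)^[n] G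

theorem bellmanLimit_le_iterate (n : ℕ) : bellmanLimit F G g ≤ (Pop F G g)^[n] G :=
  iInf_le _ n

theorem antitone_iterate_Pop : Antitone fun n => (Pop F G g)^[n] G :=
  (Pop_mono F G g).antitone_iterate_of_map_le (Pop_le F G g G)

theorem le_bellmanLimit {V : X → EReal} (hVG : V ≤ G)
    (hV : ∀ x, V x ≤ bellmanLimit F G g x ∨ V x ≤ Pop F G g V x) : V ≤ bellmanLimit F G g :=
  le_iInf fun n => (Pop_mono F G g).le_iterate_of_le_sup
    (fun n => bellmanLimit_le_iterate F G g (n + 1)) hVG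
    (fun x => (hV x).elim le_sup_of_le_left le_sup_of_le_right) n

theorem le_bellmanLimit_of_fixed {W : X → EReal} (hW : Pop F G g W = W) :
    W ≤ bellmanLimit F G g :=
  le_bellmanLimit F G g (hW ▸ Pop_le F G g W) fun x => Or.inr (congrFun hW x).ge

noncomputable def settled [Fintype X] (n : ℕ) : Finset X :=
  {x | (Pop F G g)^[n] G x = bellmanLimit F G g x}

theorem mem_settled [Fintype X] {n : ℕ} {x : X} :
    x ∈ settled F G g n ↔ (Pop F G g)^[n] G x = bellmanLimit F G g x := by
  simp only [settled, mem_filter, mem_univ, true_and]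

theorem iterate_succ_eq_bellmanLimit {n : ℕ} {x : X} {u : U}
    (hu : actionValue F g (bellmanLimit F G g) x u ≤ bellmanLimit F G g x)
    (hsettled : ∀ y ∈ F x u, (Pop F G g)^[n] G y = bellmanLimit F G g y) :
    (Pop F G g)^[n + 1] G x = bellmanLimit F G g x := by
  refine le_antisymm ?_ (bellmanLimit_le_iterate F G g _ x)
  rw [iterate_succ_apply', Pop_eq]
  refine (min_le_right _ _).trans ((iInf_le _ u).trans (le_trans ?_ hu))
  exact iSup₂_le fun y hy => by rw [hsettled y hy]; exact le_actionValue_of_mem F g hy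

theorem le_Pop_piecewise (hg : ∀ x y u, 0 ≤ g x y u) {V : X → EReal} {L : Set X}
    [DecidablePred (· ∈ L)] {m m' : EReal} (hmm' : m ≤ m') (hVL : ∀ z ∈ L, V z = m)
    (hG : ∀ z ∈ L, m' ≤ G z)
    (hv : ∀ z ∈ L, ∀ u, m < actionValue F g V z u → m' ≤ actionValue F g V z u)
    (hclosed : ∀ z ∈ L, ∀ u, actionValue F g V z u ≤ m → ∃ y ∈ F z u, y ∈ L)
    {z : X} (hz : z ∈ L) : m' ≤ Pop F G g (L.piecewise (fun _ => m') V) z := by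
  set W := L.piecewise (fun _ => m') V
  have hVW : V ≤ W := fun y => by
    by_cases hy : y ∈ L
    · simpa only [W, L.piecewise_eq_of_mem _ _ hy, hVL y hy] using hmm'
    · simp only [W, L.piecewise_eq_of_notMem _ _ hy, le_refl]
  rw [Pop_eq]
  refine le_min (hG z hz) (le_iInf fun u => ?_)
  rcases lt_or_ge m (actionValue F g V z u) with h | h
  · exact (hv z hz u h).trans (actionValue_mono F g hVW z u)
  · obtain ⟨y, hyF, hyL⟩ := hclosed z hz u h
    calc m' = W y := (L.piecewise_eq_of_mem (fun _ => m') V hyL).symm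
      _ ≤ g z y u + W y := le_add_of_nonneg_left (hg z y u)
      _ ≤ actionValue F g W z u := le_actionValue_of_mem F g hyF

theorem piecewise_le_bellmanLimit (hg : ∀ x y u, 0 ≤ g x y u) {L : Set X}
    [DecidablePred (· ∈ L)] {m m' : EReal} (hmm' : m ≤ m')
    (hVL : ∀ z ∈ L, bellmanLimit F G g z = m) (hG : ∀ z ∈ L, m' ≤ G z)
    (hv : ∀ z ∈ L, ∀ u, m < actionValue F g (bellmanLimit F G g) z u →
      m' ≤ actionValue F g (bellmanLimit F G g) z u)
    (hclosed : ∀ z ∈ L, ∀ u, actionValue F g (bellmanLimit F G g) z u ≤ m → ∃ y ∈ F z u, y ∈ L) :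
    L.piecewise (fun _ => m') (bellmanLimit F G g) ≤ bellmanLimit F G g := by
  refine le_bellmanLimit F G g (fun z => ?_) fun z => ?_
  · by_cases hz : z ∈ L
    · exact (L.piecewise_eq_of_mem (fun _ => m') _ hz).trans_le (hG z hz)
    · exact (L.piecewise_eq_of_notMem (fun _ => m') _ hz).trans_le
        (bellmanLimit_le_iterate F G g 0 z)
  · by_cases hz : z ∈ L
    · exact .inr ((L.piecewise_eq_of_mem (fun _ => m') _ hz).trans_le
        (le_Pop_piecewise F G g hg hmm' hVL hG hv hclosed hz))
    · exact .inl (L.piecewise_eq_of_notMem _ _ hz).le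

theorem exists_settles_next [Finite X] [Finite U] (hg : ∀ x y u, 0 ≤ g x y u) {n : ℕ}
    (hne : ∃ x, (Pop F G g)^[n] G x ≠ bellmanLimit F G g x) :
    ∃ x, (Pop F G g)^[n] G x ≠ bellmanLimit F G g x ∧
      (Pop F G g)^[n + 1] G x = bellmanLimit F G g x := by
  classical
  set W := (Pop F G g)^[n] G
  set V := bellmanLimit F G g
  have hVW : V ≤ W := bellmanLimit_le_iterate F G g n
  obtain ⟨x₀, hx₀, hmin⟩ := Set.exists_min_image {x | W x ≠ V x} V (Set.toFinite _) hne
  set m := V x₀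
  set L := {x | W x ≠ V x ∧ V x = m}
  have hm_top : m < ⊤ :=
    lt_top_iff_ne_top.2 fun h => hx₀ ((top_le_iff.1 (h ▸ hVW x₀)).trans h.symm)
  have hGL : ∀ z ∈ L, m < G z := by
    rintro z ⟨hz, hzm⟩
    rw [← hzm]
    refine (bellmanLimit_le_iterate F G g 0 z).lt_of_ne fun h => hz ?_
    exact le_antisymm ((antitone_iterate_Pop F G g (Nat.zero_le n) z).trans_eq h.symm) (hVW z)
  by_contra! hstuck
  have hclosed : ∀ z ∈ L, ∀ u, actionValue F g V z u ≤ m → ∃ y ∈ F z u, y ∈ L := by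
    intro z hz u hu
    by_contra! hout
    refine hstuck z hz.1 (iterate_succ_eq_bellmanLimit F G g (hu.trans_eq hz.2.symm) fun y hy => ?_)
    by_contra hyW
    exact hout y hy ⟨hyW, le_antisymm ((le_add_of_nonneg_left (hg z y u)).trans
      ((le_actionValue_of_mem F g hy).trans hu)) (hmin y hyW)⟩
  obtain ⟨m', hmm', hm'⟩ :=
    exists_gt_forall_le_of_finite hm_top (Sum.elim G fun p : X × U => actionValue F g V p.1 p.2)
  have hraised := piecewise_le_bellmanLimit F G g hg hmm'.le (fun z hz => hz.2)
    (fun z hz => hm' (.inl z) (hGL z hz)) (fun z _ u h => hm' (.inr (z, u)) h) hclosed x₀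
  exact hraised.not_gt (by simpa only [L.piecewise_eq_of_mem _ _ ⟨hx₀, rfl⟩] using hmm')

theorem card_settled_lt [Fintype X] [Finite U] (hg : ∀ x y u, 0 ≤ g x y u) {n : ℕ}
    (hn : settled F G g n ≠ univ) : #(settled F G g n) < #(settled F G g (n + 1)) := by
  have hsub : settled F G g n ⊆ settled F G g (n + 1) := fun x hx => by
    rw [mem_settled] at hx ⊢
    exact le_antisymm ((antitone_iterate_Pop F G g n.le_succ x).trans_eq hx)
      (bellmanLimit_le_iterate F G g _ x)
  obtain ⟨x, hx⟩ := not_forall.1 (mt eq_univ_iff_forall.2 hn)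
  rw [mem_settled] at hx
  obtain ⟨y, hyn, hy⟩ := exists_settles_next F G g hg ⟨x, hx⟩
  refine card_lt_card ((ssubset_iff_of_subset hsub).2 ⟨y, ?_, ?_⟩) <;>
    simpa only [mem_settled]

end Bellman

theorem stmt7_general {X U : Type*} [Fintype X] [Fintype U]
    (F : X → U → Set X) (G : X → EReal)
    (g : X → X → U → EReal) (hg : ∀ x y u, 0 ≤ g x y u) :
    ∃ N ≤ Fintype.card X,
      (Pop F G g)^[N + 1] G = (Pop F G g)^[N] G ∧
      Pop F G g ((Pop F G g)^[N] G) = (Pop F G g)^[N] G ∧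
      ∀ W : X → EReal, Pop F G g W = W → W ≤ (Pop F G g)^[N] G := by
  obtain ⟨N, hN, hsettled⟩ :=
    exists_le_card_eq_univ (settled F G g) fun n => card_settled_lt F G g hg
  have hlimit : (Pop F G g)^[N] G = bellmanLimit F G g :=
    funext fun x => mem_settled F G g |>.1 (hsettled ▸ mem_univ x)
  have hstable : (Pop F G g)^[N + 1] G = (Pop F G g)^[N] G :=
    le_antisymm (antitone_iterate_Pop F G g N.le_succ)
      (hlimit ▸ bellmanLimit_le_iterate F G g (N + 1))
  refine ⟨N, hN, hstable, ?_, fun W hW => hlimit ▸ le_bellmanLimit_of_fixed F G g hW⟩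
  rwa [iterate_succ_apply'] at hstable

theorem stmt7 {X U : Type*} [Fintype X] [Fintype U] [Nonempty X] [Nonempty U]
    (F : X → U → Set X) (hF : ∀ x u, (F x u).Nonempty)
    (G : X → EReal) (hG : ∀ x, G x ≠ ⊥)
    (g : X → X → U → EReal) (hg : ∀ x y u, 0 ≤ g x y u) :
    ∃ N ≤ Fintype.card X,
      (Pop F G g)^[N + 1] G = (Pop F G g)^[N] G ∧
      Pop F G g ((Pop F G g)^[N] G) = (Pop F G g)^[N] G ∧
      ∀ W : X → EReal, Pop F G g W = W → W ≤ (Pop F G g)^[N] G :=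
  stmt7_general F G g hg
end

section
/- Frontier correctness (key invariant of Algorithm 1): with W_0 = G and W_{n+1} = P(W_n), if W_{n+1}(x) < W_n(x) for some x ∈ X, then n = 0 or there exist u ∈ U and y ∈ F(x,u) with W_n(y) < W_{n-1}(y). Equivalently, a node's value can decrease in iteration n+1 only if one of its successors' values decreased in iteration n. -/
lemma Pop_le_Pop_of_le_on_successors {X U : Type*} (F : X → U → Set X) (G : X → EReal)
    (g : X → X → U → EReal) {W₁ W₂ : X → EReal} {x : X}
    (h : ∀ u, ∀ y ∈ F x u, W₁ y ≤ W₂ y) :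
    Pop F G g W₁ x ≤ Pop F G g W₂ x :=
  min_le_min le_rfl <| iInf_mono fun u => iSup₂_mono fun y hy => add_le_add le_rfl (h u y hy)

theorem stmt10_general {X U : Type*}
    (F : X → U → Set X)
    (G : X → EReal) (g : X → X → U → EReal) :
    ∀ (n : ℕ) (x : X),
      (Pop F G g)^[n + 1] G x < (Pop F G g)^[n] G x →
      n = 0 ∨ ∃ u : U, ∃ y ∈ F x u,
        (Pop F G g)^[n] G y < (Pop F G g)^[n - 1] G y := by
  rintro (_ | k) x hlt
  · exact .inl rfl
  refine .inr ?_
  by_contra! hno_decrease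
  simp only [Nat.add_sub_cancel, Function.iterate_succ_apply'] at hlt hno_decrease
  exact hlt.not_ge (Pop_le_Pop_of_le_on_successors F G g hno_decrease)

theorem stmt10 {X U : Type*} [Fintype X] [Fintype U] [Nonempty X] [Nonempty U]
    (F : X → U → Set X) (hF : ∀ x u, (F x u).Nonempty)
    (G : X → EReal) (g : X → X → U → EReal) (hg : ∀ x y u, 0 ≤ g x y u) :
    ∀ (n : ℕ) (x : X),
      (Pop F G g)^[n + 1] G x < (Pop F G g)^[n] G x →
      n = 0 ∨ ∃ u : U, ∃ y ∈ F x u,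
        (Pop F G g)^[n] G y < (Pop F G g)^[n - 1] G y :=
  stmt10_general F G g
end

section
/- In the value iteration W_0 = G, W_{n+1} = P(W_n) with finite X, U and g ≥ 0, for each n the set {x : W_{n+1}(x) < W_n(x)} is contained in ⋃_{u∈U} pred-image of {x : W_n(x) < W_{n-1}(x)} for n ≥ 1; formally, {x : W_{n+1}(x) < W_n(x)} ⊆ {x : ∃u∈U, ∃y∈F(x,u), W_n(y) < W_{n-1}(y)}. -/
section

variable {X U : Type*} {F : X → U → Set X} {G : X → EReal} {g : X → X → U → EReal}
  {W W' : X → EReal} {x : X}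

theorem Pop_le_Pop (h : ∀ u, ∀ y ∈ F x u, W y ≤ W' y) : Pop F G g W x ≤ Pop F G g W' x :=
  min_le_min le_rfl <| iInf_mono fun u => iSup₂_mono fun y hy => add_le_add le_rfl (h u y hy)

theorem exists_lt_of_Pop_lt (h : Pop F G g W x < Pop F G g W' x) :
    ∃ u, ∃ y ∈ F x u, W y < W' y := by
  contrapose! h
  exact Pop_le_Pop h

end

theorem stmt18_general {X U : Type*}
    (F : X → U → Set X)
    (G : X → EReal) (g : X → X → U → EReal) :
    ∀ n : ℕ, 1 ≤ n →
      {x : X | (Pop F G g)^[n + 1] G x < (Pop F G g)^[n] G x} ⊆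
      {x : X | ∃ u : U, ∃ y ∈ F x u,
        (Pop F G g)^[n] G y < (Pop F G g)^[n - 1] G y} := by
  intro n hn x hx
  obtain ⟨m, rfl⟩ := Nat.exists_eq_add_of_le' hn
  have h := exists_lt_of_Pop_lt (F := F) (G := G) (g := g) (x := x)
    (W := (Pop F G g)^[m + 1] G) (W' := (Pop F G g)^[m] G)
  rw [← Function.iterate_succ_apply' (Pop F G g), ← Function.iterate_succ_apply' (Pop F G g)]
    at h
  exact h hx

theorem stmt18 {X U : Type*} [Fintype X] [Fintype U] [Nonempty X] [Nonempty U]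
    (F : X → U → Set X) (hF : ∀ x u, (F x u).Nonempty)
    (G : X → EReal) (g : X → X → U → EReal) (hg : ∀ x y u, 0 ≤ g x y u) :
    ∀ n : ℕ, 1 ≤ n →
      {x : X | (Pop F G g)^[n + 1] G x < (Pop F G g)^[n] G x} ⊆
      {x : X | ∃ u : U, ∃ y ∈ F x u,
        (Pop F G g)^[n] G y < (Pop F G g)^[n - 1] G y} :=
  stmt18_general F G g
end
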